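/- Let \nu > 0, let r_i = \sqrt{2 z_i} for the zeros z_i of L_N^{(\nu-1)}, and set s_n := \sum_{j=1}^N r_j^n. Then for every l \ge 1, s_{2l} = 2[ \sum_{m=0}^{l-1} s_{2(l-1-m)} s_{2m} - (l - \nu) s_{2(l-1)} ], with s_0 = N. -/

import Mathlib

/-!
Evaluating the Laguerre equation `x y'' + (α + 1 - x) y' + n y = 0` at a zero `z_i` of
`y = c ∏ (x - z_j)` gives Stieltjes' electrostatic relation
`z_i - ν = ∑_{k ≠ i} 2 z_i / (z_i - z_k)` (here `α = ν - 1`). Multiplying by `z_i ^ u`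
and summing over `i`, the double sum is symmetrised in `(i, k)`, and each symmetrised pair
`(z_i ^ (u+1) - z_k ^ (u+1)) / (z_i - z_k)` is a geometric sum; this yields a quadratic
recursion for the power sums `p_u = ∑ z_i ^ u`, and `s (2u) = 2 ^ u p_u` as `r_i ^ 2 = 2 z_i`.
-/

open Polynomial Finset Matrix

/-- The generalized Laguerre polynomials `L_n^{(α)}`, orthogonal w.r.t. the weight
`e^{-x} x^α` on `(0,∞)`, defined via the standard three-term recurrence. -/
noncomputable def laguerre (α : ℝ) : ℕ → Polynomial ℝ
  | 0 => 1
  | 1 => C (1 + α) - X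
  | n + 2 => C (((n : ℝ) + 2)⁻¹) *
      ((C (2 * (n : ℝ) + 3 + α) - X) * laguerre α (n + 1) - C ((n : ℝ) + 1 + α) * laguerre α n)

namespace Polynomial

variable {K ι : Type*} [Field K]

theorem eq_C_leadingCoeff_mul_prod_X_sub_C [Fintype ι] {z : ι → K} {p : K[X]}
    (hdeg : p.natDegree = Fintype.card ι) (hz : Function.Injective z)
    (hroot : ∀ i, p.eval (z i) = 0) :
    p = C p.leadingCoeff * ∏ i, (X - C (z i)) := by
  rcases eq_or_ne p 0 with rfl | hp
  · simp
  set M : Multiset K := univ.val.map z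
  have hM : M ≤ p.roots := (Multiset.le_iff_subset (univ.nodup.map hz)).2 fun a ha => by
    obtain ⟨i, -, rfl⟩ := Multiset.mem_map.1 ha
    exact (mem_roots hp).2 (hroot i)
  have hroots : p.roots = M := (Multiset.eq_of_le_of_card_le hM (by
    simpa [M, ← hdeg] using p.card_roots')).symm
  have hcard : Multiset.card p.roots = p.natDegree := by simp [hroots, M, hdeg]
  conv_lhs => rw [← C_leadingCoeff_mul_prod_multiset_X_sub_C hcard, hroots]
  simp only [M, Multiset.map_map]
  rfl

variable [DecidableEq ι]

theorem eval_derivative_prod_X_sub_C (s : Finset ι) (z : ι → K) {x : K}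
    (hx : ∀ j ∈ s, x ≠ z j) :
    eval x (derivative (∏ j ∈ s, (X - C (z j)))) =
      eval x (∏ j ∈ s, (X - C (z j))) * ∑ k ∈ s, (x - z k)⁻¹ := by
  simp only [derivative_prod_finset, derivative_X_sub_C, mul_one, eval_finsetSum, eval_prod,
    eval_sub, eval_X, eval_C, Finset.mul_sum]
  refine Finset.sum_congr rfl fun k hk => ?_
  rw [← Finset.mul_prod_erase s _ hk, mul_comm, inv_mul_cancel_left₀ (sub_ne_zero.2 (hx k hk))]

variable [Fintype ι] {z : ι → K}

theorem eval_derivative_prod_X_sub_C_ne_zero (hz : Function.Injective z) (i : ι) :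
    eval (z i) (derivative (∏ j, (X - C (z j)))) ≠ 0 := by
  rw [← Finset.mul_prod_erase univ _ (mem_univ i)]
  simpa [eval_prod, Finset.prod_eq_zero_iff, sub_eq_zero] using fun j hj => hz.ne (Ne.symm hj)

theorem eval_derivative_derivative_prod_X_sub_C (hz : Function.Injective z) (i : ι) :
    eval (z i) (derivative (derivative (∏ j, (X - C (z j))))) =
      2 * eval (z i) (derivative (∏ j, (X - C (z j)))) *
        ∑ k ∈ univ.erase i, (z i - z k)⁻¹ := by
  have hne : ∀ j ∈ univ.erase i, z i ≠ z j := fun j hj =>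
    hz.ne (Finset.ne_of_mem_erase hj).symm
  rw [← Finset.mul_prod_erase univ _ (mem_univ i)]
  simp only [derivative_mul, derivative_X_sub_C, one_mul, derivative_add,
    zero_mul, eval_add, eval_mul, eval_sub, eval_X, eval_C, sub_self, zero_mul, add_zero]
  rw [eval_derivative_prod_X_sub_C _ _ hne]
  ring

end Polynomial

section Laguerre

variable (α : ℝ)

theorem C_mul_laguerre_add_two (n : ℕ) :
    C ((n : ℝ) + 2) * laguerre α (n + 2) =
      (C (2 * (n : ℝ) + 3 + α) - X) * laguerre α (n + 1) -
        C ((n : ℝ) + 1 + α) * laguerre α n := by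
  rw [laguerre, ← mul_assoc, ← C_mul, mul_inv_cancel₀ (by positivity), C_1, one_mul]

theorem derivative_laguerre_succ_and_X_mul_derivative (n : ℕ) :
    derivative (laguerre α (n + 1)) = derivative (laguerre α n) - laguerre α n ∧
      X * derivative (laguerre α (n + 1)) =
        C ((n : ℝ) + 1) * laguerre α (n + 1) - C ((n : ℝ) + 1 + α) * laguerre α n := by
  induction n with
  | zero => simp [laguerre]
  | succ m ih =>
    obtain ⟨hD, hXD⟩ := ih
    have hrec := C_mul_laguerre_add_two α m
    have hrec' := congrArg derivative hrec
    simp only [derivative_mul, derivative_C, derivative_sub, derivative_X, zero_mul, zero_sub,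
      zero_add] at hrec'
    simp only [C_add, C_mul, map_ofNat, C_1] at hrec hrec' hD hXD
    have hD' : derivative (laguerre α (m + 2)) =
        derivative (laguerre α (m + 1)) - laguerre α (m + 1) := by
      refine mul_left_cancel₀ (C_ne_zero.2 (by positivity : (m : ℝ) + 2 ≠ 0)) ?_
      simp only [C_add, map_ofNat]
      linear_combination hrec' + (C (m : ℝ) + 1 + C α) * hD - hXD
    refine ⟨hD', ?_⟩
    push_cast
    simp only [C_add, C_1]
    linear_combination X * hD' + hXD - hrec

theorem laguerre_ode (n : ℕ) :
    X * derivative (derivative (laguerre α n)) + (C (α + 1) - X) * derivative (laguerre α n)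
      + C (n : ℝ) * laguerre α n = 0 := by
  cases n with
  | zero => simp [laguerre]
  | succ m =>
    obtain ⟨hD, hXD⟩ := derivative_laguerre_succ_and_X_mul_derivative α m
    have hXD' := congrArg derivative hXD
    simp only [derivative_mul, derivative_C, derivative_sub, derivative_X, zero_mul, zero_add,
      one_mul] at hXD'
    push_cast
    simp only [C_add, C_1] at hD hXD hXD' ⊢
    linear_combination hXD' - hXD + (C (m : ℝ) + 1 + C α) * hD

theorem natDegree_laguerre_le (n : ℕ) : (laguerre α n).natDegree ≤ n := by
  induction n using Nat.twoStepInduction with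
  | zero => simp [laguerre]
  | one => exact (natDegree_sub_le _ _).trans (by simp)
  | more n ih₀ ih₁ =>
    refine (natDegree_C_mul_le _ _).trans <| (natDegree_sub_le _ _).trans <| max_le ?_ ?_
    · refine natDegree_mul_le.trans ?_
      have : (C (2 * (n : ℝ) + 3 + α) - X).natDegree ≤ 1 :=
        (natDegree_sub_le _ _).trans <|
          max_le ((natDegree_C _).trans_le zero_le_one) natDegree_X_le
      omega
    · exact (natDegree_C_mul_le _ _).trans (by omega)

theorem coeff_laguerre_self (n : ℕ) :
    (laguerre α n).coeff n = (-1) ^ n / (n.factorial : ℝ) := by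
  induction n using Nat.twoStepInduction with
  | zero => simp [laguerre]
  | one => simp [laguerre, coeff_X, coeff_one]
  | more n _ ih₁ =>
    rw [laguerre, sub_mul, coeff_C_mul, coeff_sub, coeff_sub, coeff_C_mul, coeff_C_mul,
      coeff_X_mul, ih₁,
      coeff_eq_zero_of_natDegree_lt ((natDegree_laguerre_le α _).trans_lt (by omega)),
      coeff_eq_zero_of_natDegree_lt ((natDegree_laguerre_le α _).trans_lt (by omega)),
      Nat.factorial_succ (n + 1)]
    push_cast
    field_simp
    ring

theorem natDegree_laguerre (n : ℕ) : (laguerre α n).natDegree = n :=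
  natDegree_eq_of_le_of_coeff_ne_zero (natDegree_laguerre_le α n)
    (by rw [coeff_laguerre_self]; positivity)

theorem leadingCoeff_laguerre (n : ℕ) :
    (laguerre α n).leadingCoeff = (-1) ^ n / (n.factorial : ℝ) := by
  rw [leadingCoeff, natDegree_laguerre, coeff_laguerre_self]

end Laguerre

theorem sub_eq_sum_div_of_laguerre_roots {ι : Type*} [Fintype ι] [DecidableEq ι]
    {α : ℝ} {n : ℕ} (hn : Fintype.card ι = n) {z : ι → ℝ} (hz : Function.Injective z)
    (hroot : ∀ i, (laguerre α n).eval (z i) = 0) (i : ι) :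
    z i - (α + 1) = ∑ k ∈ univ.erase i, 2 * z i / (z i - z k) := by
  have hode := congrArg (eval (z i)) (laguerre_ode α n)
  set L := laguerre α n
  have hfac : L = C L.leadingCoeff * ∏ j, (X - C (z j)) :=
    eq_C_leadingCoeff_mul_prod_X_sub_C (by rw [natDegree_laguerre, hn]) hz hroot
  have hc : L.leadingCoeff ≠ 0 := by rw [leadingCoeff_laguerre]; positivity
  simp only [eval_add, eval_mul, eval_sub, eval_X, eval_C, eval_zero] at hode
  rw [hroot i, hfac, derivative_C_mul, derivative_C_mul, eval_C_mul, eval_C_mul,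
    eval_derivative_derivative_prod_X_sub_C hz i] at hode
  simp only [div_eq_mul_inv, mul_assoc, ← Finset.mul_sum]
  refine mul_left_cancel₀ (mul_ne_zero hc (eval_derivative_prod_X_sub_C_ne_zero hz i)) ?_
  linear_combination -hode

section PowerSums

variable {ι : Type*} [Fintype ι] [DecidableEq ι]

theorem Finset.sum_sum_erase_comm {M : Type*} [AddCommMonoid M] (g : ι → ι → M) :
    ∑ i, ∑ k ∈ univ.erase i, g i k = ∑ i, ∑ k ∈ univ.erase i, g k i :=
  Finset.sum_comm' fun _ _ => by simp [and_comm, ne_comm]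

theorem Finset.sum_sum_erase_mul {R : Type*} [CommRing R] (f g : ι → R) :
    ∑ i, ∑ k ∈ univ.erase i, f i * g k = (∑ i, f i) * (∑ i, g i) - ∑ i, f i * g i := by
  simp only [← Finset.mul_sum, Finset.sum_erase_eq_sub (mem_univ _),
    Finset.sum_sub_distrib, Finset.sum_mul]

theorem div_sub_add_div_sub_eq_geom_sum₂ {K : Type*} [Field K] {x y : K} (h : x ≠ y) (n : ℕ) :
    x ^ (n + 1) / (x - y) + y ^ (n + 1) / (y - x) =
      ∑ m ∈ range (n + 1), x ^ m * y ^ (n - m) := by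
  have hxy : x - y ≠ 0 := sub_ne_zero.2 h
  rw [← neg_sub x y, div_neg, ← sub_eq_add_neg, ← sub_div, div_eq_iff hxy,
    ← geom_sum₂_mul, Nat.add_sub_cancel]

theorem sum_pow_succ_eq_of_sub_eq_sum_div {K : Type*} [Field K] {z : ι → K}
    (hz : Function.Injective z) {a : K}
    (h : ∀ i, z i - a = ∑ k ∈ univ.erase i, 2 * z i / (z i - z k)) (u : ℕ) :
    ∑ i, z i ^ (u + 1) =
      ∑ m ∈ range (u + 1), (∑ i, z i ^ (u - m)) * (∑ i, z i ^ m) -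
        ((u + 1) - a) * ∑ i, z i ^ u := by
  have hpair : ∑ i, z i ^ u * (z i - a) =
      ∑ i, ∑ k ∈ univ.erase i, ∑ m ∈ range (u + 1), z i ^ m * z k ^ (u - m) := by
    calc ∑ i, z i ^ u * (z i - a)
        = ∑ i, ∑ k ∈ univ.erase i,
            (z i ^ (u + 1) / (z i - z k) + z i ^ (u + 1) / (z i - z k)) := by
          refine Finset.sum_congr rfl fun i _ => ?_
          rw [h, Finset.mul_sum]
          refine Finset.sum_congr rfl fun k _ => ?_
          ring
      _ = ∑ i, ∑ k ∈ univ.erase i,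
            (z i ^ (u + 1) / (z i - z k) + z k ^ (u + 1) / (z k - z i)) := by
          simp only [Finset.sum_add_distrib]
          rw [Finset.sum_sum_erase_comm (fun i k => z i ^ (u + 1) / (z i - z k))]
      _ = _ := by
          refine Finset.sum_congr rfl fun i _ => Finset.sum_congr rfl fun k hk => ?_
          exact div_sub_add_div_sub_eq_geom_sum₂ (hz.ne (Finset.ne_of_mem_erase hk).symm) u
  have hsum : ∀ m ∈ range (u + 1), ∑ i, ∑ k ∈ univ.erase i, z i ^ m * z k ^ (u - m) =
      (∑ i, z i ^ (u - m)) * (∑ i, z i ^ m) - ∑ i, z i ^ u := fun m hm => by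
    rw [Finset.sum_sum_erase_mul, mul_comm]
    simp only [← pow_add, Nat.add_sub_cancel' (Finset.mem_range_succ_iff.1 hm)]
  rw [Finset.sum_congr rfl fun i _ => Finset.sum_comm, Finset.sum_comm,
    Finset.sum_congr rfl hsum, Finset.sum_sub_distrib] at hpair
  simp only [mul_sub, Finset.sum_sub_distrib, ← pow_succ, sum_const, card_range, nsmul_eq_mul,
    ← Finset.sum_mul] at hpair
  push_cast at hpair
  linear_combination hpair

end PowerSums

theorem stmt_16_general (N : ℕ) (ν : ℝ) (z : Fin N → ℝ)
    (hord : ∀ i j : Fin N, i < j → z j < z i)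
    (hpos : ∀ i, 0 < z i)
    (hroot : ∀ i, (laguerre (ν - 1) N).eval (z i) = 0)
    (r : Fin N → ℝ) (hr : ∀ i, r i = Real.sqrt (2 * z i))
    (s : ℕ → ℝ) (hs : ∀ n, s n = ∑ j, (r j) ^ n) :
    s 0 = N ∧
      ∀ l : ℕ, 1 ≤ l →
        s (2 * l) = 2 * ((∑ m ∈ Finset.range l, s (2 * (l - 1 - m)) * s (2 * m))
          - ((l : ℝ) - ν) * s (2 * (l - 1))) := by
  have hz : Function.Injective z := StrictAnti.injective fun i j => hord i j
  have helec : ∀ i, z i - ν = ∑ k ∈ univ.erase i, 2 * z i / (z i - z k) := by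
    simpa using sub_eq_sum_div_of_laguerre_roots (Fintype.card_fin N) hz hroot
  have hs2 : ∀ u, s (2 * u) = 2 ^ u * ∑ i, z i ^ u := fun u => by
    simp only [hs, hr, pow_mul, Real.sq_sqrt (mul_pos two_pos (hpos _)).le, mul_pow,
      Finset.mul_sum]
  refine ⟨by simp [hs], fun l hl => ?_⟩
  obtain ⟨u, rfl⟩ : ∃ u, l = u + 1 := ⟨l - 1, by omega⟩
  have hterm : ∀ m ∈ range (u + 1), s (2 * (u - m)) * s (2 * m) =
      2 ^ u * ((∑ i, z i ^ (u - m)) * ∑ i, z i ^ m) := fun m hm => by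
    rw [hs2, hs2, ← pow_sub_mul_pow 2 (Finset.mem_range_succ_iff.1 hm)]
    ring
  rw [Nat.add_sub_cancel, hs2, hs2, sum_pow_succ_eq_of_sub_eq_sum_div hz helec u,
    Finset.sum_congr rfl hterm, ← Finset.mul_sum]
  push_cast
  ring

theorem stmt_16 (N : ℕ) (ν : ℝ) (hν : 0 < ν) (z : Fin N → ℝ)
    (hord : ∀ i j : Fin N, i < j → z j < z i)
    (hpos : ∀ i, 0 < z i)
    (hroot : ∀ i, (laguerre (ν - 1) N).eval (z i) = 0)
    (r : Fin N → ℝ) (hr : ∀ i, r i = Real.sqrt (2 * z i))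
    (s : ℕ → ℝ) (hs : ∀ n, s n = ∑ j, (r j) ^ n) :
    s 0 = N ∧
      ∀ l : ℕ, 1 ≤ l →
        s (2 * l) = 2 * ((∑ m ∈ Finset.range l, s (2 * (l - 1 - m)) * s (2 * m))
          - ((l : ℝ) - ν) * s (2 * (l - 1))) :=
  stmt_16_general N ν z hord hpos hroot r hr s hs
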